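/- Let π : A → M be a bounded projection that is F-bimodular for a subfactor F ≅ M_n(ℂ) of M with matrix units f_{ij}. Define ρ(a) = Σ_{k=1}^n f_{kk} π(a) f_{kk}. Then the n-th amplification satisfies ‖ρ_n‖ ≤ ‖π‖. -/
import Mathlib

set_option synthInstance.maxHeartbeats 800000
set_option maxHeartbeats 3200000

variable {H : Type*} [NormedAddCommGroup H] [InnerProductSpace ℂ H] [CompleteSpace H]

/-- The bounded operator on the column Hilbert space induced by a matrix of bounded operators. -/
noncomputable def matCLM {k n : ℕ} (X : Matrix (Fin k) (Fin n) (H →L[ℂ] H)) :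
    PiLp 2 (fun _ : Fin n => H) →L[ℂ] PiLp 2 (fun _ : Fin k => H) :=
  ((PiLp.continuousLinearEquiv 2 ℂ (fun _ : Fin k => H)).symm.toContinuousLinearMap).comp
    ((ContinuousLinearMap.pi fun i => ∑ j, (X i j).comp (ContinuousLinearMap.proj j)).comp
      (PiLp.continuousLinearEquiv 2 ℂ (fun _ : Fin n => H)).toContinuousLinearMap)

/-- The operator norm of a matrix of bounded operators. -/
noncomputable def matNorm {k n : ℕ} (X : Matrix (Fin k) (Fin n) (H →L[ℂ] H)) : ℝ :=
  ‖matCLM X‖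

local notation "⟪" x ", " y "⟫" => @inner ℂ _ _ x y

lemma matCLM_apply {k n : ℕ} (X : Matrix (Fin k) (Fin n) (H →L[ℂ] H))
    (v : PiLp 2 (fun _ : Fin n => H)) (i : Fin k) :
    matCLM X v i = ∑ j, X i j (v j) := by
  simp [matCLM, ContinuousLinearMap.sum_apply]

section helpers
set_option linter.unusedSectionVars false
variable {n : ℕ} {f : Fin n → Fin n → (H →L[ℂ] H)}

lemma inner_ff (hmul : ∀ i j k l, f i j * f k l = if j = k then f i l else 0)
    (hstar : ∀ i j, star (f i j) = f j i) (a b c d : Fin n) (u v : H) :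
    ⟪f a b u, f c d v⟫ = if a = c then ⟪u, f b d v⟫ else 0 := by
  have h1 : f a b = ContinuousLinearMap.adjoint (f b a) := by
    rw [← ContinuousLinearMap.star_eq_adjoint, hstar]
  rw [h1, ContinuousLinearMap.adjoint_inner_left]
  have h2 : f b a (f c d v) = (f b a * f c d) v := rfl
  rw [h2, hmul]
  by_cases h : a = c <;> simp [h]

lemma key1 (hmul : ∀ i j k l, f i j * f k l = if j = k then f i l else 0)
    (hstar : ∀ i j, star (f i j) = f j i) (k : Fin n) (w : Fin n → H) :
    ⟪∑ m, f m k (w m), ∑ m, f m k (w m)⟫ = ∑ m, ⟪w m, f k k (w m)⟫ := by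
  rw [sum_inner]
  simp_rw [inner_sum, inner_ff hmul hstar]
  simp

lemma key3 (hmul : ∀ i j k l, f i j * f k l = if j = k then f i l else 0)
    (hstar : ∀ i j, star (f i j) = f j i) (hsum : ∑ i, f i i = 1)
    (k : Fin n) (a b : H) : ∑ q, ⟪f k q a, f k q b⟫ = ⟪a, b⟫ := by
  have h : ∀ q : Fin n, ⟪f k q a, f k q b⟫ = ⟪a, f q q b⟫ := by
    intro q; rw [inner_ff hmul hstar, if_pos rfl]
  simp_rw [h, ← inner_sum]
  have : ∑ q, f q q b = (∑ q, f q q) b := by simp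
  rw [this, hsum, ContinuousLinearMap.one_apply]

lemma fkk_re (hmul : ∀ i j k l, f i j * f k l = if j = k then f i l else 0)
    (hstar : ∀ i j, star (f i j) = f j i) (k : Fin n) (v : H) :
    RCLike.re ⟪v, f k k v⟫ = ‖f k k v‖^2 := by
  have := inner_ff hmul hstar k k k k v v
  rw [if_pos rfl] at this
  rw [← this, inner_self_eq_norm_sq]

lemma fkk_le (hmul : ∀ i j k l, f i j * f k l = if j = k then f i l else 0)
    (hstar : ∀ i j, star (f i j) = f j i) (k : Fin n) (v : H) : ‖f k k v‖ ≤ ‖v‖ := by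
  have h1 := fkk_re hmul hstar k v
  have h2 : RCLike.re ⟪v, f k k v⟫ ≤ ‖v‖ * ‖f k k v‖ := by
    calc RCLike.re ⟪v, f k k v⟫ ≤ ‖⟪v, f k k v⟫‖ := RCLike.re_le_norm _
    _ ≤ ‖v‖ * ‖f k k v‖ := norm_inner_le_norm _ _
  nlinarith [norm_nonneg (f k k v), norm_nonneg v]

end helpers

lemma le_of_sq_le_sq' {a b : ℝ} (hb : 0 ≤ b) (h : a^2 ≤ b^2) : a ≤ b := by
  nlinarith [abs_nonneg a, le_abs_self a, sq_abs a]

/- STATEMENT 16: If `π : A → M` is a bounded projection which is `F`-bimodular for a subfactor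
`F ≅ M_n(ℂ)` of `M` with matrix units `f_{ij}`, then `ρ(a) = ∑_k f_{kk} π(a) f_{kk}` satisfies
`‖ρ_n‖ ≤ ‖π‖` for the `n`-th amplification. -/
theorem stmt_16 (A : StarSubalgebra ℂ (H →L[ℂ] H)) (M : VonNeumannAlgebra H)
    (hMA : ∀ x, x ∈ M → x ∈ A)
    {n : ℕ} [NeZero n]
    -- matrix units `f_{ij}` of a subfactor `F ≅ M_n(ℂ)` of `M`:
    (f : Fin n → Fin n → (H →L[ℂ] H)) (hfM : ∀ i j, f i j ∈ M)
    (hmul : ∀ i j k l, f i j * f k l = if j = k then f i l else 0)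
    (hstar : ∀ i j, star (f i j) = f j i)
    (hsum : ∑ i, f i i = 1)
    -- `π` is a bounded projection of `A` onto `M` with `‖π‖ ≤ Cπ`:
    (π : A →ₗ[ℂ] (H →L[ℂ] H)) (hπr : ∀ a, π a ∈ M)
    (hπf : ∀ a : A, (a : H →L[ℂ] H) ∈ M → π a = a)
    (Cπ : ℝ) (hπb : ∀ a : A, ‖π a‖ ≤ Cπ * ‖a‖)
    -- `π` is `F`-bimodular:
    (hmod : ∀ (i j k l : Fin n) (a x : A),
      (x : H →L[ℂ] H) = f i j * (a : H →L[ℂ] H) * f k l →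
      π x = f i j * π a * f k l) :
    -- then the `n`-th amplification of `ρ(a) = ∑_k f_kk π(a) f_kk` has norm `≤ ‖π‖`:
    ∀ X : Matrix (Fin n) (Fin n) A,
      matNorm (X.map fun a => ∑ k, f k k * π a * f k k) ≤
        Cπ * matNorm (X.map fun a => (a : H →L[ℂ] H)) := by
  intro X
  classical
  rcases subsingleton_or_nontrivial H with hH | hH
  · have h0 : ∀ (Y : Matrix (Fin n) (Fin n) (H →L[ℂ] H)), matNorm Y = 0 := by
      intro Y
      have hY : matCLM Y = 0 := by
        ext v i
        exact Subsingleton.elim _ _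
      rw [matNorm, hY]
      exact ContinuousLinearMap.opNorm_zero
    rw [h0, h0, mul_zero]
  -- Nontrivial case
  have hC : 1 ≤ Cπ := by
    have h1M : ((1 : A) : H →L[ℂ] H) ∈ M := one_mem M
    have h := hπb 1
    rw [hπf 1 h1M] at h
    have h1 : ‖((1 : A) : H →L[ℂ] H)‖ = 1 := norm_one
    have h1' : ‖(1 : A)‖ = 1 := h1
    rw [h1', mul_one, h1] at h
    exact h
  have hC0 : 0 ≤ Cπ := by linarith
  set S := matCLM (X.map fun a => (a : H →L[ℂ] H)) with hSdef
  have hSv : ∀ (v : PiLp 2 (fun _ : Fin n => H)) (p : Fin n),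
      S v p = ∑ q, (X p q : H →L[ℂ] H) (v q) := by
    intro v p
    rw [hSdef, matCLM_apply]
    rfl
  show ‖matCLM (X.map fun a => ∑ k, f k k * π a * f k k)‖ ≤ Cπ * ‖S‖
  -- the compressed elements b_k ∈ A and the identity π(b k) = ∑ f p k π(X p q) f k q
  set fA : Fin n → Fin n → A := fun i j => ⟨f i j, hMA _ (hfM i j)⟩ with hfA
  set bA : Fin n → A := fun k => ∑ p, ∑ q, fA p k * X p q * fA k q with hbA
  have hπbA : ∀ k, π (bA k) = ∑ p, ∑ q, f p k * π (X p q) * f k q := by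
    intro k
    rw [hbA]
    simp only [map_sum]
    refine Finset.sum_congr rfl fun p _ => Finset.sum_congr rfl fun q _ => ?_
    exact hmod p k k q (X p q) _ rfl
  have hbcoe : ∀ k, ((bA k : A) : H →L[ℂ] H)
      = ∑ p, ∑ q, f p k * (X p q : H →L[ℂ] H) * f k q := by
    intro k
    rw [hbA]
    push_cast
    rfl
  -- norm bound on b k
  have hbnorm : ∀ k, ‖((bA k : A) : H →L[ℂ] H)‖ ≤ ‖S‖ := by
    intro k
    apply ContinuousLinearMap.opNorm_le_bound _ (norm_nonneg S)
    intro z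
    set v : PiLp 2 (fun _ : Fin n => H) :=
      (WithLp.equiv 2 (∀ _ : Fin n, H)).symm (fun q => f k q z) with hv
    have hvq : ∀ q, v q = f k q z := fun q => rfl
    have happ2 : ((bA k : A) : H →L[ℂ] H) z = ∑ p, f p k (S v p) := by
      rw [hbcoe k, ContinuousLinearMap.sum_apply]
      refine Finset.sum_congr rfl fun p _ => ?_
      rw [ContinuousLinearMap.sum_apply, hSv v p, map_sum]
      rfl
    have hnv : ‖v‖^2 = ‖z‖^2 := by
      rw [PiLp.norm_sq_eq_of_L2]
      have : ∀ q : Fin n, ‖v q‖^2 = RCLike.re ⟪f k q z, f k q z⟫ := by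
        intro q; rw [hvq q, inner_self_eq_norm_sq]
      simp_rw [this]
      rw [← map_sum, key3 hmul hstar hsum k z z, inner_self_eq_norm_sq]
    have hsq : ‖((bA k : A) : H →L[ℂ] H) z‖^2 ≤ (‖S‖ * ‖z‖)^2 := by
      rw [happ2, ← inner_self_eq_norm_sq (𝕜 := ℂ), key1 hmul hstar k (fun p => S v p), map_sum]
      calc ∑ p, RCLike.re ⟪S v p, f k k (S v p)⟫
          = ∑ p, ‖f k k (S v p)‖^2 := by simp_rw [fkk_re hmul hstar]
        _ ≤ ∑ p, ‖S v p‖^2 :=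
            Finset.sum_le_sum fun p _ =>
              pow_le_pow_left₀ (norm_nonneg _) (fkk_le hmul hstar k _) 2
        _ = ‖S v‖^2 := (PiLp.norm_sq_eq_of_L2 _ _).symm
        _ ≤ (‖S‖ * ‖v‖)^2 :=
            pow_le_pow_left₀ (norm_nonneg _) (S.le_opNorm v) 2
        _ = (‖S‖ * ‖z‖)^2 := by rw [mul_pow, mul_pow, hnv]
    exact le_of_sq_le_sq' (mul_nonneg (norm_nonneg S) (norm_nonneg z)) hsq
  -- main estimate
  apply ContinuousLinearMap.opNorm_le_bound _ (mul_nonneg hC0 (norm_nonneg S))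
  intro ξ
  set ζ : Fin n → H := fun k => ∑ m, f m k (ξ m) with hζ
  set u : Fin n → H := fun k => π (bA k) (ζ k) with hu
  have hfζ : ∀ k q, f k q (ζ k) = f k k (ξ q) := by
    intro k q
    rw [hζ]
    simp only [map_sum]
    have h1 : ∀ m, f k q (f m k (ξ m)) = (f k q * f m k) (ξ m) := fun m => rfl
    simp_rw [h1, hmul]
    have h2 : ∀ m : Fin n, ((if q = m then f k k else 0 : H →L[ℂ] H)) (ξ m)
        = if q = m then f k k (ξ m) else 0 := by
      intro m; split <;> simp
    simp_rw [h2]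
    rw [Finset.sum_ite_eq]
    simp
  have hrhs : ∀ i k, f k i (u k) = ∑ q, f k k (π (X i q) (f k k (ξ q))) := by
    intro i k
    rw [hu]
    simp only
    rw [hπbA k, ContinuousLinearMap.sum_apply, map_sum]
    have h1 : ∀ p, f k i ((∑ q, f p k * π (X p q) * f k q) (ζ k))
        = ∑ q, if i = p then f k k (π (X p q) (f k k (ξ q))) else 0 := by
      intro p
      rw [ContinuousLinearMap.sum_apply, map_sum]
      refine Finset.sum_congr rfl fun q _ => ?_
      have e1 : (f p k * π (X p q) * f k q) (ζ k) = f p k (π (X p q) (f k q (ζ k))) := rfl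
      rw [e1, hfζ k q]
      have e2 : f k i (f p k (π (X p q) (f k k (ξ q))))
          = (f k i * f p k) (π (X p q) (f k k (ξ q))) := rfl
      rw [e2, hmul]
      split <;> simp
    simp_rw [h1]
    rw [Finset.sum_comm]
    refine Finset.sum_congr rfl fun q _ => ?_
    rw [Finset.sum_ite_eq]
    simp
  have happ : ∀ i, matCLM (X.map fun a => ∑ k, f k k * π a * f k k) ξ i
      = ∑ k, f k i (u k) := by
    intro i
    rw [matCLM_apply]
    have lhs : ∀ j, (X.map fun a => ∑ k, f k k * π a * f k k) i j (ξ j)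
        = ∑ k, f k k (π (X i j) (f k k (ξ j))) := by
      intro j
      rw [Matrix.map_apply, ContinuousLinearMap.sum_apply]
      exact Finset.sum_congr rfl fun k _ => rfl
    simp_rw [lhs, hrhs i]
    exact Finset.sum_comm
  -- squared norm computation
  have hTsq : ‖matCLM (X.map fun a => ∑ k, f k k * π a * f k k) ξ‖^2 = ∑ k, ‖u k‖^2 := by
    rw [PiLp.norm_sq_eq_of_L2]
    have h1 : ∀ i : Fin n, ‖matCLM (X.map fun a => ∑ k, f k k * π a * f k k) ξ i‖^2
        = ∑ k, RCLike.re ⟪u k, f i i (u k)⟫ := by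
      intro i
      rw [← inner_self_eq_norm_sq (𝕜 := ℂ), happ i, key1 hmul hstar i u, map_sum]
    simp_rw [h1]
    rw [Finset.sum_comm]
    refine Finset.sum_congr rfl fun k _ => ?_
    rw [← map_sum, ← inner_sum]
    have : ∑ i, f i i (u k) = (∑ i, f i i) (u k) := by simp
    rw [this, hsum, ContinuousLinearMap.one_apply, inner_self_eq_norm_sq]
  have huseq : ∀ k, ‖u k‖ ≤ (Cπ * ‖S‖) * ‖ζ k‖ := by
    intro k
    have s1 : ‖u k‖ ≤ ‖π (bA k)‖ * ‖ζ k‖ := (π (bA k)).le_opNorm (ζ k)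
    have s2 : ‖π (bA k)‖ ≤ Cπ * ‖S‖ := by
      have := hπb (bA k)
      have hb : ‖bA k‖ ≤ ‖S‖ := hbnorm k
      calc ‖π (bA k)‖ ≤ Cπ * ‖bA k‖ := hπb (bA k)
        _ ≤ Cπ * ‖S‖ := mul_le_mul_of_nonneg_left hb hC0
    calc ‖u k‖ ≤ ‖π (bA k)‖ * ‖ζ k‖ := s1
      _ ≤ (Cπ * ‖S‖) * ‖ζ k‖ := mul_le_mul_of_nonneg_right s2 (norm_nonneg _)
  have hζsum : ∑ k, ‖ζ k‖^2 = ‖ξ‖^2 := by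
    have h1 : ∀ k, ‖ζ k‖^2 = ∑ m, RCLike.re ⟪ξ m, f k k (ξ m)⟫ := by
      intro k
      rw [← inner_self_eq_norm_sq (𝕜 := ℂ), hζ]
      simp only
      rw [key1 hmul hstar k (fun m => ξ m), map_sum]
    simp_rw [h1]
    rw [Finset.sum_comm, PiLp.norm_sq_eq_of_L2]
    refine Finset.sum_congr rfl fun m _ => ?_
    rw [← map_sum, ← inner_sum]
    have : ∑ k, f k k (ξ m) = (∑ k, f k k) (ξ m) := by simp
    rw [this, hsum, ContinuousLinearMap.one_apply, inner_self_eq_norm_sq]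
  have final : ‖matCLM (X.map fun a => ∑ k, f k k * π a * f k k) ξ‖^2
      ≤ ((Cπ * ‖S‖) * ‖ξ‖)^2 := by
    rw [hTsq]
    calc ∑ k, ‖u k‖^2 ≤ ∑ k, ((Cπ * ‖S‖) * ‖ζ k‖)^2 :=
        Finset.sum_le_sum fun k _ => pow_le_pow_left₀ (norm_nonneg _) (huseq k) 2
      _ = (Cπ * ‖S‖)^2 * ∑ k, ‖ζ k‖^2 := by
          rw [Finset.mul_sum]
          exact Finset.sum_congr rfl fun k _ => by ring
      _ = ((Cπ * ‖S‖) * ‖ξ‖)^2 := by rw [hζsum]; ring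
  exact le_of_sq_le_sq' (mul_nonneg (mul_nonneg hC0 (norm_nonneg S)) (norm_nonneg ξ)) final
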